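/- Let G be a graph and let M be a module of G such that the edge set of the induced subgraph G[M] forms a matching F_M. Let F be any matching of G and let P be an F-augmenting path of minimum length. Then P contains at most one edge of F_M. -/

import Mathlib

open SimpleGraph

/-- A module of a graph: every vertex outside `M` is adjacent to all of `M` or to none of `M`. -/
def IsModule {V : Type*} (G : SimpleGraph V) (M : Set V) : Prop :=
  ∀ x ∈ M, ∀ y ∈ M, ∀ z, z ∉ M → (G.Adj x z ↔ G.Adj y z)

/-- A matching: a set of edges of `G` with pairwise disjoint endpoints. -/
def IsMatching {V : Type*} (G : SimpleGraph V) (F : Set (Sym2 V)) : Prop :=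
  F ⊆ G.edgeSet ∧ ∀ e ∈ F, ∀ f ∈ F, ∀ v : V, v ∈ e → v ∈ f → e = f

/-- A vertex is matched by `F` if it is an endpoint of an edge of `F`. -/
def Matched {V : Type*} (F : Set (Sym2 V)) (v : V) : Prop := ∃ e ∈ F, v ∈ e

/-- The subgraph of `G` induced by `M`, viewed as a graph on the same vertex set. -/
def inducedOn {V : Type*} (G : SimpleGraph V) (M : Set V) : SimpleGraph V where
  Adj u v := G.Adj u v ∧ u ∈ M ∧ v ∈ M
  symm := ⟨fun u v ⟨h, hu, hv⟩ => ⟨h.symm, hv, hu⟩⟩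
  loopless := ⟨fun v h => G.loopless.1 v h.1⟩

/-- An `F`-augmenting path: a path whose two endpoints are exposed by `F` and whose
edges belong alternately to `E ∖ F` and to `F`. -/
def IsAugPath {V : Type*} (G : SimpleGraph V) (F : Set (Sym2 V)) {a b : V}
    (p : G.Walk a b) : Prop :=
  p.IsPath ∧ ¬Matched F a ∧ ¬Matched F b ∧ 0 < p.length ∧
  ∀ (i : ℕ) (h : i < p.edges.length), (p.edges.get ⟨i, h⟩ ∈ F ↔ Odd i)

/-!
Suppose a shortest augmenting path `P` used two edges of the matching induced on the module `M`.
Since the induced edges form a matching, no two of them are consecutive on `P`, so `P` leaves `M`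
just before or just after each of them; by the module property such an outside neighbour of one
edge is also adjacent to the endpoints of the other. Choosing the side according to the parities
of the two edges' positions yields a chord from an even to a later odd position of `P`. The even
end is exposed or matched along `P`, so the chord is not a matching edge, and replacing the
segment of `P` it spans gives a shorter augmenting path.
-/

namespace SimpleGraph.Walk

variable {V : Type*} {G : SimpleGraph V} {u v : V} {p : G.Walk u v}

lemma IsPath.getVert_inj (hp : p.IsPath) {i j : ℕ} (hi : i ≤ p.length) (hj : j ≤ p.length) :
    p.getVert i = p.getVert j ↔ i = j :=
  ⟨fun h => hp.getVert_injOn hi hj h, congrArg p.getVert⟩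

def shortcut (p : G.Walk u v) (k m : ℕ) (h : G.Adj (p.getVert k) (p.getVert m)) : G.Walk u v :=
  (p.take k).append (cons h (p.drop m))

variable {k m : ℕ} {h : G.Adj (p.getVert k) (p.getVert m)}

lemma length_shortcut (hk : k ≤ p.length) :
    (p.shortcut k m h).length = k + 1 + (p.length - m) := by
  simp [shortcut, hk]
  omega

lemma edges_shortcut : (p.shortcut k m h).edges =
    p.edges.take k ++ s(p.getVert k, p.getVert m) :: p.edges.drop m := by
  simp [shortcut, edges_take, edges_drop]

lemma IsPath.shortcut (hp : p.IsPath) (hkm : k < m) (hm : m ≤ p.length) :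
    (p.shortcut k m h).IsPath := by
  rw [isPath_def, Walk.shortcut, support_append, support_cons, List.tail_cons, support_take,
    drop_support_eq_support_drop_min]
  have := (p.support.drop_sublist_drop_left (by omega : k + 1 ≤ m ⊓ p.length)).append_left
    (p.support.take (k + 1))
  rw [List.take_append_drop] at this
  exact hp.support_nodup.sublist this

end SimpleGraph.Walk

section AugmentingPath

variable {V : Type*} {G : SimpleGraph V} {F : Set (Sym2 V)} {a b : V} {p : G.Walk a b}

lemma IsAugPath.edge_mem_iff (hp : IsAugPath G F p) {i : ℕ} (hi : i < p.length) :
    s(p.getVert i, p.getVert (i + 1)) ∈ F ↔ Odd i := by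
  simpa [Walk.getElem_edges] using hp.2.2.2.2 i (by simpa using hi)

lemma IsAugPath.odd_length (hp : IsAugPath G F p) : Odd p.length := by
  obtain ⟨n, hn⟩ := Nat.exists_eq_add_one.mpr hp.2.2.2.1
  have hlast : s(p.getVert n, p.getVert (n + 1)) ∉ F := fun hF =>
    hp.2.2.1 ⟨_, hF, by rw [← hn, p.getVert_length]; exact Sym2.mem_mk_right _ _⟩
  rw [hp.edge_mem_iff (by omega)] at hlast
  rw [hn, Nat.odd_add_one]
  exact hlast

lemma IsAugPath.edge_notMem_of_even (hF : IsMatching G F) (hp : IsAugPath G F p) {k m : ℕ}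
    (hk : Even k) (hkm : k < m) (hm : m ≤ p.length) : s(p.getVert k, p.getVert m) ∉ F := by
  intro hkmF
  obtain _ | k' := k
  · exact hp.2.1 ⟨_, hkmF, by simp⟩
  have hk'F : s(p.getVert k', p.getVert (k' + 1)) ∈ F :=
    (hp.edge_mem_iff (by omega)).mpr (by simpa [Nat.even_add_one] using hk)
  have hm_mem : p.getVert m ∈ s(p.getVert k', p.getVert (k' + 1)) :=
    hF.2 _ hkmF _ hk'F _ (Sym2.mem_mk_left _ _) (Sym2.mem_mk_right _ _) ▸ Sym2.mem_mk_right _ _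
  rcases Sym2.mem_iff.mp hm_mem with h | h <;>
    rw [hp.1.getVert_inj (by omega) (by omega)] at h <;> omega

lemma IsAugPath.shortcut (hF : IsMatching G F) (hp : IsAugPath G F p) {k m : ℕ}
    (hk : Even k) (hm : Odd m) (hkm : k < m) (hml : m ≤ p.length)
    (h : G.Adj (p.getVert k) (p.getVert m)) : IsAugPath G F (p.shortcut k m h) := by
  refine ⟨hp.1.shortcut hkm hml, hp.2.1, hp.2.2.1,
    by simp [Walk.length_shortcut, hkm.le.trans hml], ?_⟩
  intro i hi
  have hnew := hp.edge_notMem_of_even hF hk hkm hml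
  have halt := hp.2.2.2.2
  have hlen := p.length_edges
  rw [Walk.length_edges, Walk.length_shortcut (by omega)] at hi
  simp only [List.get_eq_getElem] at halt ⊢
  simp only [Walk.edges_shortcut, List.getElem_append, List.getElem_cons, List.length_take,
    List.getElem_take, List.getElem_drop]
  rw [Nat.even_iff] at hk
  rw [Nat.odd_iff] at hm
  split_ifs with hbefore hjump
  · exact halt i (by omega)
  · simp only [hnew, false_iff, Nat.not_odd_iff]
    omega
  · rw [halt _ (by omega), Nat.odd_iff, Nat.odd_iff]
    omega

lemma IsAugPath.exists_shorter_of_adj (hF : IsMatching G F) (hp : IsAugPath G F p) {k m : ℕ}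
    (hk : Even k) (hm : Odd m) (hkm : k + 2 ≤ m) (hml : m ≤ p.length)
    (h : G.Adj (p.getVert k) (p.getVert m)) :
    ∃ q : G.Walk a b, IsAugPath G F q ∧ q.length < p.length :=
  ⟨_, hp.shortcut hF hk hm (by omega) hml h, by rw [Walk.length_shortcut (by omega)]; omega⟩

end AugmentingPath

section Module

variable {V : Type*} {G : SimpleGraph V} {M : Set V}

lemma IsModule.adj_of_adj (hM : IsModule G M) {x y z : V} (hx : x ∈ M) (hy : y ∈ M)
    (hz : z ∉ M) (h : G.Adj z x) : G.Adj z y :=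
  ((hM x hx y hy z hz).mp h.symm).symm

lemma SimpleGraph.Walk.IsPath.getVert_add_two_notMem {u v : V} {p : G.Walk u v} (hp : p.IsPath)
    (hFM : IsMatching (inducedOn G M) (inducedOn G M).edgeSet) {n : ℕ} (hn : n + 2 ≤ p.length)
    (h₀ : p.getVert n ∈ M) (h₁ : p.getVert (n + 1) ∈ M) : p.getVert (n + 2) ∉ M := by
  intro h₂
  have hedge : ∀ i, i < p.length → p.getVert i ∈ M → p.getVert (i + 1) ∈ M →
      s(p.getVert i, p.getVert (i + 1)) ∈ (inducedOn G M).edgeSet :=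
    fun i hi hi₀ hi₁ => ⟨p.adj_getVert_succ hi, hi₀, hi₁⟩
  have heq := hFM.2 _ (hedge n (by omega) h₀ h₁) _ (hedge (n + 1) (by omega) h₁ h₂) _
    (Sym2.mem_mk_right _ _) (Sym2.mem_mk_left _ _)
  have hmem : p.getVert (n + 2) ∈ s(p.getVert n, p.getVert (n + 1)) :=
    heq ▸ Sym2.mem_mk_right _ _
  rcases Sym2.mem_iff.mp hmem with h | h <;>
    rw [hp.getVert_inj (by omega) (by omega)] at h <;> omega

variable {F : Set (Sym2 V)} {a b : V} {p : G.Walk a b}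

lemma IsAugPath.exists_shorter_of_module_edges (hM : IsModule G M)
    (hFM : IsMatching (inducedOn G M) (inducedOn G M).edgeSet) (hF : IsMatching G F)
    (hp : IsAugPath G F p) {i j : ℕ} (hij : i < j) (hj : j < p.length)
    (hi₀ : p.getVert i ∈ M) (hi₁ : p.getVert (i + 1) ∈ M)
    (hj₀ : p.getVert j ∈ M) (hj₁ : p.getVert (j + 1) ∈ M) :
    ∃ q : G.Walk a b, IsAugPath G F q ∧ q.length < p.length := by
  have hij' : i + 2 ≤ j := by
    by_contra hne
    obtain rfl : j = i + 1 := by omega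
    exact hp.1.getVert_add_two_notMem hFM (by omega) hi₀ hi₁ hj₁
  rcases Nat.even_or_odd i with hie | hio
  · rcases Nat.even_or_odd j with hje | hjo
    · obtain ⟨j, rfl⟩ : ∃ j', j = j' + 1 := ⟨j - 1, by omega⟩
      have hout : p.getVert j ∉ M := fun h =>
        hp.1.getVert_add_two_notMem hFM (by omega) h hj₀ hj₁
      have hne : j ≠ i + 1 := by rintro rfl; exact hout hi₁
      exact hp.exists_shorter_of_adj hF hie (by simpa [Nat.even_add_one] using hje) (by omega)
        (by omega) (hM.adj_of_adj hj₀ hi₀ hout (p.adj_getVert_succ (by omega))).symm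
    · have hj₂ : j + 2 ≤ p.length := by
        have := hp.odd_length
        rw [Nat.odd_iff] at hjo this
        omega
      have hout := hp.1.getVert_add_two_notMem hFM hj₂ hj₀ hj₁
      exact hp.exists_shorter_of_adj hF hie (hjo.add_even even_two) (by omega) hj₂
        (hM.adj_of_adj hj₁ hi₀ hout (p.adj_getVert_succ (by omega)).symm).symm
  · obtain ⟨i, rfl⟩ : ∃ i', i = i' + 1 := ⟨i - 1, by rw [Nat.odd_iff] at hio; omega⟩
    have hout : p.getVert i ∉ M := fun h =>
      hp.1.getVert_add_two_notMem hFM (by omega) h hi₀ hi₁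
    have hie : Even i := by simpa [Nat.odd_add_one] using hio
    have hadj := p.adj_getVert_succ (i := i) (by omega)
    rcases Nat.even_or_odd j with hje | hjo
    · exact hp.exists_shorter_of_adj hF hie hje.add_one (by omega) (by omega)
        (hM.adj_of_adj hi₀ hj₁ hout hadj)
    · exact hp.exists_shorter_of_adj hF hie hjo (by omega) (by omega)
        (hM.adj_of_adj hi₀ hj₀ hout hadj)

end Module

theorem min_aug_path_at_most_one_module_edge_general {V : Type*}
    (G : SimpleGraph V) (M : Set V) (hM : IsModule G M)
    (FM : Set (Sym2 V)) (hFM : IsMatching (inducedOn G M) FM)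
    (hEM : (inducedOn G M).edgeSet = FM)
    (F : Set (Sym2 V)) (hF : IsMatching G F)
    (a b : V) (p : G.Walk a b) (hp : IsAugPath G F p)
    (hmin : ∀ (c d : V) (q : G.Walk c d), IsAugPath G F q → p.length ≤ q.length) :
    ∀ e1 ∈ p.edges, ∀ e2 ∈ p.edges, e1 ∈ FM → e2 ∈ FM → e1 = e2 := by
  subst hEM
  have hlen := p.length_edges
  have not_both : ∀ i j (hij : i < j) (hj : j < p.edges.length),
      p.edges[i] ∈ (inducedOn G M).edgeSet → p.edges[j] ∉ (inducedOn G M).edgeSet := by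
    intro i j hij hj hi hj'
    rw [Walk.getElem_edges] at hi hj'
    obtain ⟨q, hq, hlt⟩ := hp.exists_shorter_of_module_edges hM hFM hF hij (by omega)
      hi.2.1 hi.2.2 hj'.2.1 hj'.2.2
    exact (hmin a b q hq).not_gt hlt
  intro e₁ he₁ e₂ he₂ h₁ h₂
  obtain ⟨i, hi, rfl⟩ := List.mem_iff_getElem.mp he₁
  obtain ⟨j, hj, rfl⟩ := List.mem_iff_getElem.mp he₂
  rcases lt_trichotomy i j with hij | rfl | hji
  · exact absurd h₂ (not_both i j hij hj h₁)
  · rfl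
  · exact absurd h₁ (not_both j i hji hi h₂)

/-- If `M` is a module of `G` whose induced edge set forms a matching `F_M`, `F` is a
matching of `G` and `P` is an `F`-augmenting path of minimum length, then `P` contains
at most one edge of `F_M`. -/
theorem min_aug_path_at_most_one_module_edge {V : Type*} [Fintype V]
    (G : SimpleGraph V) (M : Set V) (hM : IsModule G M)
    (FM : Set (Sym2 V)) (hFM : IsMatching (inducedOn G M) FM)
    (hEM : (inducedOn G M).edgeSet = FM)
    (F : Set (Sym2 V)) (hF : IsMatching G F)
    (a b : V) (p : G.Walk a b) (hp : IsAugPath G F p)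
    (hmin : ∀ (c d : V) (q : G.Walk c d), IsAugPath G F q → p.length ≤ q.length) :
    ∀ e1 ∈ p.edges, ∀ e2 ∈ p.edges, e1 ∈ FM → e2 ∈ FM → e1 = e2 :=
  min_aug_path_at_most_one_module_edge_general G M hM FM hFM hEM F hF a b p hp hmin
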